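/- The function u(x,y,z,t) = (x²+y²)z² + (1/24)(x²+y²)³ + (4z² + 2(x²+y²)²)t + 17(x²+y²)t² + (68/3)t³ is a classical solution of the horizontal heat equation ∂_t u = Δ_H u at every point of ℍ × ℝ, and for every t ≥ 0 the symmetrized horizontal Hessian (∇_H²u)*(p,t) is a positive semidefinite 2×2 matrix at every p ∈ ℍ (i.e., u(·,t) is v-convex on ℍ). -/

import Mathlib

/-!
The horizontal derivatives of `u` are polynomials, and the heat equation is the identity
`X₁²u + X₂²u = 4z² + 2r² + 34rt + 68t² = ∂ₜu`, where `r = x² + y²`.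

The horizontal Hessian is quadratic in `t`: `H(t) = H(0) + t • H₁ + 34t² • 1`. The coefficient
`H₁ = 10r • 1 + 14 (x, y)ᵀ(x, y)` has determinant `240r²`, and `H(0)` has determinant
`4z⁴ + 15r⁴/16`; both have nonnegative diagonals, so all three coefficients are positive
semidefinite, hence so is `H(t)` for `t ≥ 0`.
-/

noncomputable section

/-- The Heisenberg group as a set: `ℝ³` with coordinates `(x, y, z)`. -/
abbrev Heis : Type := ℝ × ℝ × ℝ

/-- The Heisenberg group multiplication. -/
def Hmul (p q : Heis) : Heis :=
  (p.1 + q.1, p.2.1 + q.2.1, p.2.2 + q.2.2 + (p.1 * q.2.1 - q.1 * p.2.1) / 2)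

/-- The Heisenberg group inverse. -/
def Hinv (p : Heis) : Heis := (-p.1, -p.2.1, -p.2.2)

/-- The Korányi gauge `|p|_G = ((x² + y²)² + 16 z²)^(1/4)`. -/
def kGauge (p : Heis) : ℝ := ((p.1 ^ 2 + p.2.1 ^ 2) ^ 2 + 16 * p.2.2 ^ 2) ^ ((1 : ℝ) / 4)

/-- The left-invariant gauge metric `d_L(p,q) = |p⁻¹·q|_G`. -/
def dL (p q : Heis) : ℝ := kGauge (Hmul (Hinv p) q)

/-- The right-invariant gauge metric `d_R(p,q) = |p·q⁻¹|_G`. -/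
def dR (p q : Heis) : ℝ := kGauge (Hmul p (Hinv q))

/-- The horizontal vector field `X₁ = ∂ₓ - (y/2)∂_z` applied to `f` at `p`. -/
def X1 (f : Heis → ℝ) (p : Heis) : ℝ := fderiv ℝ f p (1, 0, -p.2.1 / 2)

/-- The horizontal vector field `X₂ = ∂_y + (x/2)∂_z` applied to `f` at `p`. -/
def X2 (f : Heis → ℝ) (p : Heis) : ℝ := fderiv ℝ f p (0, 1, p.1 / 2)

/-- The horizontal Laplacian `Δ_H f = X₁(X₁ f) + X₂(X₂ f)`. -/
def deltaH (f : Heis → ℝ) (p : Heis) : ℝ := X1 (X1 f) p + X2 (X2 f) p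

/-- The symmetrized horizontal Hessian `(∇_H² f)*`. -/
def hessH (f : Heis → ℝ) (p : Heis) : Matrix (Fin 2) (Fin 2) ℝ :=
  !![X1 (X1 f) p, (X1 (X2 f) p + X2 (X1 f) p) / 2;
     (X1 (X2 f) p + X2 (X1 f) p) / 2, X2 (X2 f) p]

/-- The function
`u(x,y,z,t) = (x²+y²)z² + (x²+y²)³/24 + (4z² + 2(x²+y²)²)t + 17(x²+y²)t² + (68/3)t³`. -/
def u15 (p : Heis) (t : ℝ) : ℝ :=
  (p.1 ^ 2 + p.2.1 ^ 2) * p.2.2 ^ 2 + (p.1 ^ 2 + p.2.1 ^ 2) ^ 3 / 24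
    + (4 * p.2.2 ^ 2 + 2 * (p.1 ^ 2 + p.2.1 ^ 2) ^ 2) * t
    + 17 * (p.1 ^ 2 + p.2.1 ^ 2) * t ^ 2 + 68 / 3 * t ^ 3

open Matrix in
theorem Matrix.posSemidef_of_fin_two {R : Type*} [CommRing R] [LinearOrder R]
    [IsStrictOrderedRing R] [StarRing R] [TrivialStar R] {a b d : R}
    (ha : 0 ≤ a) (hd : 0 ≤ d) (hb : b ^ 2 ≤ a * d) :
    (!![a, b; b, d] : Matrix (Fin 2) (Fin 2) R).PosSemidef := by
  refine PosSemidef.of_dotProduct_mulVec_nonneg ?_ fun v => ?_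
  · ext i j
    fin_cases i <;> fin_cases j <;> simp
  · have hform : star v ⬝ᵥ (!![a, b; b, d] *ᵥ v)
        = a * v 0 ^ 2 + 2 * b * (v 0 * v 1) + d * v 1 ^ 2 := by
      simp only [dotProduct, mulVec, Fin.sum_univ_two, Pi.star_apply, star_trivial, of_apply,
        cons_val', cons_val_fin_one, cons_val_zero, cons_val_one]
      ring
    rw [hform]
    rcases ha.eq_or_lt with rfl | ha
    · obtain rfl : b = 0 := by nlinarith
      nlinarith [mul_nonneg hd (sq_nonneg (v 1))]
    · -- `a` times the form is `(a v₀ + b v₁)² + (a d - b²) v₁²`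
      nlinarith [sq_nonneg (a * v 0 + b * v 1), mul_nonneg (sub_nonneg.2 hb) (sq_nonneg (v 1))]

lemma hasDerivAt_u15 (p : Heis) (t : ℝ) :
    HasDerivAt (fun s => u15 p s)
      (4 * p.2.2 ^ 2 + 2 * (p.1 ^ 2 + p.2.1 ^ 2) ^ 2 + 34 * (p.1 ^ 2 + p.2.1 ^ 2) * t
        + 68 * t ^ 2) t := by
  have hd : DifferentiableAt ℝ (fun s => u15 p s) t := by unfold u15; fun_prop
  refine hd.hasDerivAt.congr_deriv ?_
  unfold u15
  simp (disch := fun_prop) [deriv_fun_add, deriv_fun_mul, deriv_fun_pow]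
  ring

lemma X1_u15 (t : ℝ) :
    X1 (fun q => u15 q t) = fun p =>
      2 * p.1 * p.2.2 ^ 2 + p.1 * (p.1 ^ 2 + p.2.1 ^ 2) ^ 2 / 4
        + 8 * p.1 * (p.1 ^ 2 + p.2.1 ^ 2) * t + 34 * p.1 * t ^ 2
        - p.2.1 * (p.1 ^ 2 + p.2.1 ^ 2) * p.2.2 - 4 * p.2.1 * p.2.2 * t := by
  funext p
  simp (disch := fun_prop) [X1, u15, div_eq_mul_inv, fderiv_fun_add, fderiv_fun_mul,
    fderiv_fun_pow, fderiv.fst, fderiv.snd]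
  ring

lemma X2_u15 (t : ℝ) :
    X2 (fun q => u15 q t) = fun p =>
      2 * p.2.1 * p.2.2 ^ 2 + p.2.1 * (p.1 ^ 2 + p.2.1 ^ 2) ^ 2 / 4
        + 8 * p.2.1 * (p.1 ^ 2 + p.2.1 ^ 2) * t + 34 * p.2.1 * t ^ 2
        + p.1 * (p.1 ^ 2 + p.2.1 ^ 2) * p.2.2 + 4 * p.1 * p.2.2 * t := by
  funext p
  simp (disch := fun_prop) [X2, u15, div_eq_mul_inv, fderiv_fun_add, fderiv_fun_mul,
    fderiv_fun_pow, fderiv.fst, fderiv.snd]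
  ring

lemma X1_X1_u15 (t : ℝ) (p : Heis) :
    X1 (X1 (fun q => u15 q t)) p
      = 2 * p.2.2 ^ 2 + (p.1 ^ 2 + p.2.1 ^ 2) ^ 2 / 4 + p.1 ^ 2 * (p.1 ^ 2 + p.2.1 ^ 2)
        + p.2.1 ^ 2 * (p.1 ^ 2 + p.2.1 ^ 2) / 2 - 4 * p.1 * p.2.1 * p.2.2
        + (8 * (p.1 ^ 2 + p.2.1 ^ 2) + 16 * p.1 ^ 2 + 2 * p.2.1 ^ 2) * t + 34 * t ^ 2 := by
  rw [X1_u15]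
  simp (disch := fun_prop) [X1, div_eq_mul_inv, fderiv_fun_add, fderiv_fun_sub, fderiv_fun_mul,
    fderiv_fun_pow, fderiv.fst, fderiv.snd]
  ring

lemma X2_X2_u15 (t : ℝ) (p : Heis) :
    X2 (X2 (fun q => u15 q t)) p
      = 2 * p.2.2 ^ 2 + (p.1 ^ 2 + p.2.1 ^ 2) ^ 2 / 4 + p.2.1 ^ 2 * (p.1 ^ 2 + p.2.1 ^ 2)
        + p.1 ^ 2 * (p.1 ^ 2 + p.2.1 ^ 2) / 2 + 4 * p.1 * p.2.1 * p.2.2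
        + (8 * (p.1 ^ 2 + p.2.1 ^ 2) + 16 * p.2.1 ^ 2 + 2 * p.1 ^ 2) * t + 34 * t ^ 2 := by
  rw [X2_u15]
  simp (disch := fun_prop) [X2, div_eq_mul_inv, fderiv_fun_add, fderiv_fun_mul,
    fderiv_fun_pow, fderiv.fst, fderiv.snd]
  ring

lemma X1_X2_u15 (t : ℝ) (p : Heis) :
    X1 (X2 (fun q => u15 q t)) p
      = p.1 * p.2.1 * (p.1 ^ 2 + p.2.1 ^ 2) / 2 + 2 * (p.1 ^ 2 - p.2.1 ^ 2) * p.2.2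
        + (p.1 ^ 2 + p.2.1 ^ 2) * p.2.2 + 14 * p.1 * p.2.1 * t + 4 * p.2.2 * t := by
  rw [X2_u15]
  simp (disch := fun_prop) [X1, div_eq_mul_inv, fderiv_fun_add, fderiv_fun_mul,
    fderiv_fun_pow, fderiv.fst, fderiv.snd]
  ring

lemma X2_X1_u15 (t : ℝ) (p : Heis) :
    X2 (X1 (fun q => u15 q t)) p
      = p.1 * p.2.1 * (p.1 ^ 2 + p.2.1 ^ 2) / 2 + 2 * (p.1 ^ 2 - p.2.1 ^ 2) * p.2.2
        - (p.1 ^ 2 + p.2.1 ^ 2) * p.2.2 + 14 * p.1 * p.2.1 * t - 4 * p.2.2 * t := by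
  rw [X1_u15]
  simp (disch := fun_prop) [X2, div_eq_mul_inv, fderiv_fun_add, fderiv_fun_sub, fderiv_fun_mul,
    fderiv_fun_pow, fderiv.fst, fderiv.snd]
  ring

lemma deltaH_u15 (t : ℝ) (p : Heis) :
    deltaH (fun q => u15 q t) p
      = 4 * p.2.2 ^ 2 + 2 * (p.1 ^ 2 + p.2.1 ^ 2) ^ 2 + 34 * (p.1 ^ 2 + p.2.1 ^ 2) * t
        + 68 * t ^ 2 := by
  rw [deltaH, X1_X1_u15, X2_X2_u15]
  ring

def u15HessLinCoeff (p : Heis) : Matrix (Fin 2) (Fin 2) ℝ :=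
  !![24 * p.1 ^ 2 + 10 * p.2.1 ^ 2, 14 * p.1 * p.2.1;
     14 * p.1 * p.2.1, 10 * p.1 ^ 2 + 24 * p.2.1 ^ 2]

lemma hessH_u15 (t : ℝ) (p : Heis) :
    hessH (fun q => u15 q t) p
      = hessH (fun q => u15 q 0) p + t • u15HessLinCoeff p + (34 * t ^ 2) • 1 := by
  simp only [hessH, X1_X1_u15, X2_X2_u15, X1_X2_u15, X2_X1_u15, u15HessLinCoeff]
  ext i j
  fin_cases i <;> fin_cases j <;> simp <;> ring

lemma posSemidef_u15HessLinCoeff (p : Heis) : (u15HessLinCoeff p).PosSemidef := by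
  obtain ⟨x, y, z⟩ := p
  refine Matrix.posSemidef_of_fin_two (by positivity) (by positivity) ?_
  have : 0 ≤ 240 * (x ^ 2 + y ^ 2) ^ 2 := by positivity
  linear_combination this

lemma posSemidef_hessH_u15_zero (p : Heis) : (hessH (fun q => u15 q 0) p).PosSemidef := by
  obtain ⟨x, y, z⟩ := p
  simp only [hessH, X1_X1_u15, X2_X2_u15, X1_X2_u15, X2_X1_u15]
  refine Matrix.posSemidef_of_fin_two ?_ ?_ ?_
  · have : 0 ≤ 2 * (z - x * y) ^ 2 + 5 / 4 * x ^ 4 + 3 / 4 * y ^ 4 := by positivity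
    linear_combination this
  · have : 0 ≤ 2 * (z + x * y) ^ 2 + 3 / 4 * x ^ 4 + 5 / 4 * y ^ 4 := by positivity
    linear_combination this
  · have : 0 ≤ 4 * z ^ 4 + 15 / 16 * (x ^ 2 + y ^ 2) ^ 4 := by positivity
    linear_combination this

/-- `u15` solves the horizontal heat equation classically everywhere, and for each `t ≥ 0`
its symmetrized horizontal Hessian is positive semidefinite everywhere (v-convexity). -/
theorem u15_heat_and_vConvex :
    (∀ p : Heis, ∀ t : ℝ,
      HasDerivAt (fun s : ℝ => u15 p s) (deltaH (fun q => u15 q t) p) t) ∧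
    (∀ t : ℝ, 0 ≤ t → ∀ p : Heis, (hessH (fun q => u15 q t) p).PosSemidef) := by
  refine ⟨fun p t => deltaH_u15 t p ▸ hasDerivAt_u15 p t, fun t ht p => ?_⟩
  rw [hessH_u15]
  exact ((posSemidef_hessH_u15_zero p).add ((posSemidef_u15HessLinCoeff p).smul ht)).add
    (Matrix.PosSemidef.one.smul (by positivity))
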